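/- If a ∈ X and P ∈ ℚ⟨X⟩ is a Lie polynomial, then r(P · ι a) = −[ι a, P]. -/

import Mathlib

/-!
Setting: `ℚ⟨X⟩ = FreeAlgebra ℚ X`, the free associative `ℚ`-algebra on a type `X` of
non-commuting variables, with the commutator bracket `⁅P,Q⁆ = P*Q - Q*P` and canonical
inclusion `ι = FreeAlgebra.ι ℚ`.  The words (elements of `FreeMonoid X`) form a `ℚ`-basis
`FreeAlgebra.basisFreeMonoid ℚ X` of `ℚ⟨X⟩`.
-/

/-- The right-normed bracketing of a word:
`[ι x₁,[ι x₂,[…,[ι x_{n−1}, ι xₙ]…]]]`, with the empty word mapped to `0`. -/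
noncomputable def rword {X : Type*} : List X → FreeAlgebra ℚ X
  | [] => 0
  | [x] => FreeAlgebra.ι ℚ x
  | x :: y :: ys => ⁅FreeAlgebra.ι ℚ x, rword (y :: ys)⁆

/-- The right-normed bracketing map `r : ℚ⟨X⟩ → ℚ⟨X⟩`: the unique `ℚ`-linear map sending the
basis word `w₁w₂⋯wₙ` to `[ι w₁,[ι w₂,[…,[ι w_{n−1}, ι wₙ]…]]]` (and the empty word `1` to `0`,
and a single letter `x` to `ι x`). -/
noncomputable def rmap (X : Type*) : FreeAlgebra ℚ X →ₗ[ℚ] FreeAlgebra ℚ X :=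
  (FreeAlgebra.basisFreeMonoid ℚ X).constr ℚ fun w => rword w.toList

/-- The coefficient of the word `w` in `P`, with respect to the basis of words of `ℚ⟨X⟩`. -/
noncomputable def coeffWord {X : Type*} (P : FreeAlgebra ℚ X) (w : FreeMonoid X) : ℚ :=
  (FreeAlgebra.basisFreeMonoid ℚ X).repr P w

attribute [local instance 100] LieRing.ofAssociativeRing

/-- `P` is a Lie polynomial: it belongs to the Lie subalgebra of `ℚ⟨X⟩` (under the commutator
bracket) generated by the image of `ι`, i.e. the smallest `ℚ`-subspace of `ℚ⟨X⟩` containing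
`ι(X)` and closed under commutators. -/
def IsLiePolynomial {X : Type*} (P : FreeAlgebra ℚ X) : Prop :=
  P ∈ LieSubalgebra.lieSpan ℚ (FreeAlgebra ℚ X) (Set.range (FreeAlgebra.ι ℚ))

/-- `P` is homogeneous of degree `n`: a `ℚ`-linear combination of words of length `n`. -/
def IsHomogeneous {X : Type*} (n : ℕ) (P : FreeAlgebra ℚ X) : Prop :=
  P ∈ Submodule.span ℚ
    ((fun w : List X => (w.map (FreeAlgebra.ι ℚ)).prod) '' {w : List X | w.length = n})

/-!
Let `θ = adLift ℚ X : ℚ⟨X⟩ → End ℚ⟨X⟩` be the algebra map with `θ (ι x) = ad (ι x)`.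
Unfolding the right-normed bracketing,
`r (w₁⋯wₙ · ι a) = ad (ι w₁) ⋯ ad (ι wₙ) (ι a) = θ (w₁⋯wₙ) (ι a)`, so `r (Q · ι a) = θ Q (ι a)`
for every `Q` by linearity. An algebra map is a Lie algebra map for the commutator brackets, so
`θ` and `ad` are Lie algebra maps agreeing on `ι(X)`, hence on every Lie polynomial `P`; thus
`r (P · ι a) = ⁅P, ι a⁆ = -⁅ι a, P⁆`.
-/

theorem LieHom.eqOn_lieSpan {R L L' : Type*} [CommRing R] [LieRing L] [LieAlgebra R L]
    [LieRing L'] [LieAlgebra R L'] {f g : L →ₗ⁅R⁆ L'} {s : Set L} (h : Set.EqOn f g s) :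
    Set.EqOn f g (LieSubalgebra.lieSpan R L s) := by
  intro x hx
  induction hx using LieSubalgebra.lieSpan_induction with
  | mem x hx => exact h hx
  | zero => simp
  | add x y _ _ hx hy => simp [hx, hy]
  | smul t x _ hx => simp [hx]
  | lie x y _ _ hx hy => simp [hx, hy]

namespace FreeAlgebra

theorem basisFreeMonoid_apply (R : Type*) {X : Type*} [CommSemiring R] (w : FreeMonoid X) :
    basisFreeMonoid R X w = (w.toList.map (ι R)).prod := by
  simp [basisFreeMonoid, equivMonoidAlgebraFreeMonoid, AlgEquiv.ofAlgHom,
    MonoidAlgebra.lift_single, FreeMonoid.lift_apply]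

variable (R X : Type*) [CommRing R]

noncomputable def adLift : FreeAlgebra R X →ₐ[R] Module.End R (FreeAlgebra R X) :=
  lift R fun x => LieAlgebra.ad R (FreeAlgebra R X) (ι R x)

variable {R X}

theorem adLift_eq_ad {P : FreeAlgebra R X}
    (hP : P ∈ LieSubalgebra.lieSpan R (FreeAlgebra R X) (Set.range (ι R))) :
    adLift R X P = LieAlgebra.ad R (FreeAlgebra R X) P := by
  refine LieHom.eqOn_lieSpan (f := (adLift R X).toLieHom) ?_ hP
  rintro _ ⟨x, rfl⟩
  simp [adLift]

end FreeAlgebra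

open FreeAlgebra

theorem rword_append_singleton {X : Type*} (l : List X) (a : X) :
    rword (l ++ [a]) = adLift ℚ X (l.map (ι ℚ)).prod (ι ℚ a) := by
  induction l with
  | nil => simp [rword]
  | cons x l ih =>
    obtain ⟨y, ys, hl⟩ : ∃ y ys, l ++ [a] = y :: ys := List.exists_cons_of_ne_nil (by simp)
    rw [List.cons_append, hl, rword, ← hl, ih]
    simp [adLift, Module.End.mul_apply]

theorem rmap_mul_ι {X : Type*} (Q : FreeAlgebra ℚ X) (a : X) :
    rmap X (Q * ι ℚ a) = adLift ℚ X Q (ι ℚ a) := by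
  suffices (rmap X) ∘ₗ LinearMap.mulRight ℚ (ι ℚ a) =
      LinearMap.applyₗ (ι ℚ a) ∘ₗ (adLift ℚ X).toLinearMap from
    LinearMap.congr_fun this Q
  refine (basisFreeMonoid ℚ X).ext fun w => ?_
  have hw : basisFreeMonoid ℚ X w * ι ℚ a = basisFreeMonoid ℚ X (w * FreeMonoid.of a) := by
    simp [basisFreeMonoid_apply]
  simp only [LinearMap.comp_apply, LinearMap.mulRight_apply, hw, rmap,
    Module.Basis.constr_basis, FreeMonoid.toList_mul, FreeMonoid.toList_of]
  simp [rword_append_singleton, basisFreeMonoid_apply]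

/-- If `a ∈ X` and `P` is a Lie polynomial, then `r(P · ι a) = −[ι a, P]`. -/
theorem stmt_5 {X : Type*} (a : X) (P : FreeAlgebra ℚ X) (hLie : IsLiePolynomial P) :
    rmap X (P * FreeAlgebra.ι ℚ a) = -⁅FreeAlgebra.ι ℚ a, P⁆ := by
  rw [rmap_mul_ι, adLift_eq_ad hLie, LieAlgebra.ad_apply, ← lie_skew]
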